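/- arXiv:2012.12349 — 4 statements merged into one kernel-verified Lean document; each statement's English description precedes it below -/
import Mathlib

section
/- Let X be a metric space, ζ: 𝒮 → [0,+∞] a gauge on a class 𝒮 ⊆ 𝒫(X), A ⊆ X a nonempty set, μ a measure over X, and t > 0. Assume that (1) μ is a regular measure, (2) the class 𝒮_{μ,ζ} covers A finely, and (3) the Federer density satisfies F^ζ(μ,x) < t for every x ∈ A. Then μ(E) ≤ t·ψ_ζ(E) for every E ⊆ A. -/
/-! Let `A_k` be the set of points `x` such that `Q_{μ,ζ}(S) < t` for every `S ∈ 𝒮_{μ,ζ}` with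
`x ∈ S` and `diam S < 1/(k+1)`; the density hypothesis says that these increasing sets exhaust `A`.
Every `S ∈ 𝒮` that small and meeting `A_k` satisfies `μ S ≤ t ζ(S)` (trivially when
`S ∉ 𝒮_{μ,ζ}`), so countable subadditivity over the coverings defining `φ_{ζ,δ}` gives
`μ(E ∩ A_k) ≤ t ψ_ζ(E)`. A regular outer measure is continuous from below along arbitrary
increasing sequences, which lets `k → ∞`. -/

open MeasureTheory Set ENNReal Filter

noncomputable section

/-- The subclass `𝒮_{μ,ζ}` of a class of sets `𝒮`, obtained by removing the sets `S`
where `ζ S = μ S = 0` or `ζ S = μ S = +∞`. -/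
def goodClass {X : Type*} [MetricSpace X] (μ : OuterMeasure X) (𝒮 : Set (Set X))
    (ζ : Set X → ℝ≥0∞) : Set (Set X) :=
  {S ∈ 𝒮 | ¬ ((ζ S = 0 ∧ μ S = 0) ∨ (ζ S = ⊤ ∧ μ S = ⊤))}

/-- The quotient function `Q_{μ,ζ}`: equals `+∞` if `ζ S = 0`, `μ S / ζ S` if
`0 < ζ S < +∞`, and `0` if `ζ S = +∞` (note `a / ⊤ = 0` in `ℝ≥0∞`). -/
def fedQuot {X : Type*} [MetricSpace X] (μ : OuterMeasure X) (ζ : Set X → ℝ≥0∞)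
    (S : Set X) : ℝ≥0∞ :=
  if ζ S = 0 then ⊤ else μ S / ζ S

/-- A family of sets `ℱ` covers `A` finely: for every `a ∈ A` and every `ε > 0` there is
`S ∈ ℱ` containing `a` with `diam S < ε`. -/
def CoversFinely {X : Type*} [MetricSpace X] (ℱ : Set (Set X)) (A : Set X) : Prop :=
  ∀ a ∈ A, ∀ ε : ℝ≥0∞, 0 < ε → ∃ S ∈ ℱ, a ∈ S ∧ EMetric.diam S < ε

/-- The Federer density `F^ζ(μ,x)`. -/
def federerDensity {X : Type*} [MetricSpace X] (μ : OuterMeasure X) (𝒮 : Set (Set X))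
    (ζ : Set X → ℝ≥0∞) (x : X) : ℝ≥0∞ :=
  ⨅ (ε : ℝ≥0∞) (_ : 0 < ε),
    ⨆ (S : Set X) (_ : S ∈ goodClass μ 𝒮 ζ) (_ : x ∈ S) (_ : EMetric.diam S < ε),
      fedQuot μ ζ S

/-- The size-`δ` premeasure `φ_{ζ,δ}` of the Carathéodory construction. -/
def preCarMeasure {X : Type*} [MetricSpace X] (𝒮 : Set (Set X)) (ζ : Set X → ℝ≥0∞)
    (δ : ℝ≥0∞) (R : Set X) : ℝ≥0∞ :=
  ⨅ (E : ℕ → Set X) (_ : ∀ j, E j ∈ 𝒮) (_ : ∀ j, EMetric.diam (E j) ≤ δ)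
    (_ : R ⊆ ⋃ j, E j), ∑' j, ζ (E j)

/-- The Carathéodory measure `ψ_ζ`. -/
def carMeasure {X : Type*} [MetricSpace X] (𝒮 : Set (Set X)) (ζ : Set X → ℝ≥0∞)
    (R : Set X) : ℝ≥0∞ :=
  ⨆ (δ : ℝ≥0∞) (_ : 0 < δ), preCarMeasure 𝒮 ζ δ R

/-- The `τ`-enlargement `Ŝ` of a set `S`. -/
def enlargement {X : Type*} [MetricSpace X] (μ : OuterMeasure X) (𝒮 : Set (Set X))
    (ζ : Set X → ℝ≥0∞) (τ : ℝ) (S : Set X) : Set X :=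
  ⋃₀ {T ∈ goodClass μ 𝒮 ζ | (T ∩ S).Nonempty ∧
      EMetric.diam T ≤ ENNReal.ofReal τ * EMetric.diam S}

/-- `μ` is a regular (outer) measure: every set is contained in a `μ`-measurable set of
the same measure. -/
def IsRegularOM {X : Type*} [MetricSpace X] (μ : OuterMeasure X) : Prop :=
  ∀ E : Set X, ∃ F : Set X, E ⊆ F ∧ μ.IsCaratheodory F ∧ μ F = μ E

/-- `μ` is a Borel (outer) measure: every Borel set is `μ`-measurable. -/
def IsBorelOM {X : Type*} [MetricSpace X] (μ : OuterMeasure X) : Prop :=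
  ∀ E : Set X, MeasurableSet[borel X] E → μ.IsCaratheodory E

/-- `μ` is a Borel regular (outer) measure. -/
def IsBorelRegularOM {X : Type*} [MetricSpace X] (μ : OuterMeasure X) : Prop :=
  IsBorelOM μ ∧ ∀ E : Set X, ∃ B : Set X, E ⊆ B ∧ MeasurableSet[borel X] B ∧ μ B = μ E

/-- Carathéodory measurability of a set with respect to a set function. -/
def SetFnCaratheodory {X : Type*} (ν : Set X → ℝ≥0∞) (E : Set X) : Prop :=
  ∀ T : Set X, ν T = ν (T ∩ E) + ν (T \ E)

/-- `μ⌊A << ν⌊A`: absolute continuity of the restrictions to `A`. -/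
def AbsContOn {X : Type*} [MetricSpace X] (μ : OuterMeasure X) (ν : Set X → ℝ≥0∞)
    (A : Set X) : Prop :=
  ∀ E : Set X, ν (A ∩ E) = 0 → μ (A ∩ E) = 0

/-- `S` is σ-finite with respect to the set function `ν`. -/
def SigmaFiniteWrt {X : Type*} (ν : Set X → ℝ≥0∞) (S : Set X) : Prop :=
  ∃ E : ℕ → Set X, S ⊆ ⋃ j, E j ∧ ∀ j, ν (E j) < ⊤

/-- The integral `∫_B f dν` with respect to an (outer) set function `ν`,
via the layer-cake formula. -/
def omIntegral {X : Type*} (ν : Set X → ℝ≥0∞) (B : Set X) (f : X → ℝ≥0∞) : ℝ≥0∞ :=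
  ∫⁻ t in Set.Ioi (0 : ℝ), ν {x ∈ B | ENNReal.ofReal t < f x}

/-- The enlargement condition: there are `c ≥ 1` and `η > 0` such that every
`S ∈ 𝒮_{μ,ζ}` admits `S̃ ∈ 𝒮` with `Ŝ ⊆ S̃`, `diam S̃ ≤ c diam S` and `ζ S̃ ≤ η ζ S`. -/
def EnlCondition {X : Type*} [MetricSpace X] (μ : OuterMeasure X) (𝒮 : Set (Set X))
    (ζ : Set X → ℝ≥0∞) (τ : ℝ) : Prop :=
  ∃ c : ℝ, 1 ≤ c ∧ ∃ η : ℝ, 0 < η ∧ ∀ S ∈ goodClass μ 𝒮 ζ, ∃ S' ∈ 𝒮,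
    enlargement μ 𝒮 ζ τ S ⊆ S' ∧ EMetric.diam S' ≤ ENNReal.ofReal c * EMetric.diam S ∧
      ζ S' ≤ ENNReal.ofReal η * ζ S

/-- The gauge `ζ_α(S) = c_α (diam S)^α`. -/
def zetaDiam {X : Type*} [MetricSpace X] (cα α : ℝ) (S : Set X) : ℝ≥0∞ :=
  ENNReal.ofReal cα * EMetric.diam S ^ α

/-- The family `ℱ` of closed subsets of `X`. -/
def closedSets (X : Type*) [MetricSpace X] : Set (Set X) := {S | IsClosed S}

/-- The family `ℱ_b` of closed balls of `X` (with positive radius). -/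
def closedBalls (X : Type*) [MetricSpace X] : Set (Set X) :=
  {S | ∃ (y : X) (r : ℝ), 0 < r ∧ S = Metric.closedBall y r}

/-- The family `ℱ_o` of open balls of `X` (with positive radius). -/
def openBalls (X : Type*) [MetricSpace X] : Set (Set X) :=
  {S | ∃ (y : X) (r : ℝ), 0 < r ∧ S = Metric.ball y r}

/-- The `α`-dimensional Hausdorff measure `ℋ^α` with normalizing constant `c_α`. -/
def hausdorffMeasureC (X : Type*) [MetricSpace X] (cα α : ℝ) : Set X → ℝ≥0∞ :=
  carMeasure (closedSets X) (zetaDiam cα α)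

/-- The `α`-dimensional spherical Hausdorff measure `𝒮^α` with constant `c_α`. -/
def sphericalMeasureC (X : Type*) [MetricSpace X] (cα α : ℝ) : Set X → ℝ≥0∞ :=
  carMeasure (closedBalls X) (zetaDiam cα α)

/-- `X` is diametrically regular. -/
def DiametricallyRegular (X : Type*) [MetricSpace X] : Prop :=
  ∀ x : X, ∃ R > (0 : ℝ), ∃ δ > (0 : ℝ), ∀ y ∈ Metric.ball x R,
    ContinuousOn (fun r : ℝ => EMetric.diam (Metric.ball y r)) (Set.Ioo 0 δ)

end

namespace IsRegularOM

variable {X : Type*} [MetricSpace X] {μ : OuterMeasure X}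

theorem toMeasure_apply (hμ : IsRegularOM μ) (s : Set X) :
    @OuterMeasure.toMeasure X μ.caratheodory μ le_rfl s = μ s := by
  let := μ.caratheodory
  refine le_antisymm ?_ (le_toMeasure_apply μ le_rfl s)
  obtain ⟨F, hsF, hFmeas, hFs⟩ := hμ s
  calc μ.toMeasure le_rfl s ≤ μ.toMeasure le_rfl F := measure_mono hsF
    _ = μ s := by rw [MeasureTheory.toMeasure_apply μ le_rfl hFmeas, hFs]

theorem measure_iUnion_of_monotone (hμ : IsRegularOM μ) {B : ℕ → Set X} (hB : Monotone B) :
    μ (⋃ k, B k) = ⨆ k, μ (B k) := by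
  let := μ.caratheodory
  simpa only [hμ.toMeasure_apply] using hB.measure_iUnion (μ := μ.toMeasure le_rfl)

end IsRegularOM

section Caratheodory

variable {X : Type*} [MetricSpace X] (μ : OuterMeasure X) (𝒮 : Set (Set X))
  (ζ : Set X → ℝ≥0∞)

theorem preCarMeasure_le_carMeasure {δ : ℝ≥0∞} (hδ : 0 < δ) (R : Set X) :
    preCarMeasure 𝒮 ζ δ R ≤ carMeasure 𝒮 ζ R :=
  le_iSup₂_of_le δ hδ le_rfl

theorem preCarMeasure_mono (δ : ℝ≥0∞) : Monotone (preCarMeasure 𝒮 ζ δ) :=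
  fun _ _ hRR' => iInf₂_mono fun _ _ => iInf₂_mono' fun hdiam hcover =>
    ⟨hdiam, hRR'.trans hcover, le_rfl⟩

theorem carMeasure_mono : Monotone (carMeasure 𝒮 ζ) :=
  fun _ _ hRR' => iSup₂_mono fun δ _ => preCarMeasure_mono 𝒮 ζ δ hRR'

/-- `federerDensity μ 𝒮 ζ x = ⨅ ε > 0, fedQuotSup μ 𝒮 ζ ε x`. -/
noncomputable def fedQuotSup (ε : ℝ≥0∞) (x : X) : ℝ≥0∞ :=
  ⨆ (S : Set X) (_ : S ∈ goodClass μ 𝒮 ζ) (_ : x ∈ S) (_ : Metric.ediam S < ε), fedQuot μ ζ S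

variable {μ 𝒮 ζ}

theorem le_mul_preCarMeasure_of_forall {t δ : ℝ≥0∞} (ht0 : t ≠ 0) (htop : t ≠ ⊤) {R : Set X}
    (h : ∀ S ∈ 𝒮, Metric.ediam S ≤ δ → (S ∩ R).Nonempty → μ S ≤ t * ζ S) :
    μ R ≤ t * preCarMeasure 𝒮 ζ δ R := by
  rw [preCarMeasure]
  simp only [ENNReal.mul_iInf_of_ne ht0 htop]
  refine le_iInf fun C => le_iInf fun hC𝒮 => le_iInf fun hCdiam => le_iInf fun hRC => ?_
  have hpiece (j : ℕ) : μ (C j ∩ R) ≤ t * ζ (C j) := by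
    rcases (C j ∩ R).eq_empty_or_nonempty with hempty | hne
    · simp [hempty]
    · exact (measure_mono inter_subset_left).trans (h _ (hC𝒮 j) (hCdiam j) hne)
  calc μ R = μ (⋃ j, C j ∩ R) := by rw [← iUnion_inter, inter_eq_right.2 hRC]
    _ ≤ ∑' j, μ (C j ∩ R) := measure_iUnion_le _
    _ ≤ ∑' j, t * ζ (C j) := ENNReal.tsum_le_tsum hpiece
    _ = t * ∑' j, ζ (C j) := ENNReal.tsum_mul_left

theorem fedQuotSup_mono (x : X) : Monotone fun ε => fedQuotSup μ 𝒮 ζ ε x :=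
  fun _ _ hεε' => iSup₂_mono fun _ _ => iSup₂_mono' fun hx hdiam =>
    ⟨hx, hdiam.trans_le hεε', le_rfl⟩

theorem fedQuot_le_fedQuotSup {ε : ℝ≥0∞} {x : X} {S : Set X} (hS : S ∈ goodClass μ 𝒮 ζ)
    (hxS : x ∈ S) (hdiam : Metric.ediam S < ε) : fedQuot μ ζ S ≤ fedQuotSup μ 𝒮 ζ ε x :=
  le_iSup₂_of_le S hS (le_iSup₂_of_le hxS hdiam le_rfl)

theorem exists_fedQuotSup_lt_of_federerDensity_lt {x : X} {t : ℝ≥0∞}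
    (h : federerDensity μ 𝒮 ζ x < t) : ∃ k : ℕ, fedQuotSup μ 𝒮 ζ (k + 1 : ℝ≥0∞)⁻¹ x < t := by
  obtain ⟨ε, hεt⟩ := iInf_lt_iff.1 h
  obtain ⟨hε, hεt⟩ := iInf_lt_iff.1 hεt
  obtain ⟨k, hk⟩ := ENNReal.exists_inv_nat_lt hε.ne'
  refine ⟨k, lt_of_le_of_lt (fedQuotSup_mono x ?_) hεt⟩
  exact (ENNReal.inv_le_inv' le_self_add).trans hk.le

theorem measure_le_mul_of_fedQuotSup_lt {ε t : ℝ≥0∞} {x : X} (ht : fedQuotSup μ 𝒮 ζ ε x < t)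
    {S : Set X} (hS : S ∈ 𝒮) (hxS : x ∈ S) (hdiam : Metric.ediam S < ε) :
    μ S ≤ t * ζ S := by
  have ht0 : t ≠ 0 := (pos_of_gt ht).ne'
  by_cases hgood : S ∈ goodClass μ 𝒮 ζ
  · have hQ : fedQuot μ ζ S < t := (fedQuot_le_fedQuotSup hgood hxS hdiam).trans_lt ht
    by_cases hζ0 : ζ S = 0
    · simp [fedQuot, hζ0] at hQ
    by_cases hζtop : ζ S = ⊤
    · simp [hζtop, ENNReal.mul_top ht0]
    rw [fedQuot, if_neg hζ0] at hQ
    exact ((ENNReal.div_lt_iff (Or.inl hζ0) (Or.inl hζtop)).1 hQ).le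
  · rcases not_not.1 (not_and.1 hgood hS) with ⟨-, hμ0⟩ | ⟨hζtop, -⟩
    · simp [hμ0]
    · simp [hζtop, ENNReal.mul_top ht0]

theorem measure_le_mul_carMeasure_of_fedQuotSup_lt {ε t : ℝ≥0∞} (hε : 0 < ε) (htop : t ≠ ⊤)
    {R : Set X} (hR : ∀ x ∈ R, fedQuotSup μ 𝒮 ζ ε x < t) : μ R ≤ t * carMeasure 𝒮 ζ R := by
  rcases R.eq_empty_or_nonempty with rfl | ⟨x, hx⟩
  · simp
  obtain ⟨δ, hδ, hδε⟩ := exists_between hε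
  have hcompare : ∀ S ∈ 𝒮, Metric.ediam S ≤ δ → (S ∩ R).Nonempty → μ S ≤ t * ζ S :=
    fun S hS hdiam ⟨y, hyS, hyR⟩ =>
      measure_le_mul_of_fedQuotSup_lt (hR y hyR) hS hyS (hdiam.trans_lt hδε)
  calc μ R ≤ t * preCarMeasure 𝒮 ζ δ R :=
        le_mul_preCarMeasure_of_forall (pos_of_gt (hR x hx)).ne' htop hcompare
    _ ≤ t * carMeasure 𝒮 ζ R := by gcongr; exact preCarMeasure_le_carMeasure 𝒮 ζ hδ R

end Caratheodory

theorem stmt0_general {X : Type*} [MetricSpace X] (μ : MeasureTheory.OuterMeasure X)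
    (𝒮 : Set (Set X)) (ζ : Set X → ℝ≥0∞) (A : Set X)
    (t : ℝ)
    (h1 : IsRegularOM μ)
    (h3 : ∀ x ∈ A, federerDensity μ 𝒮 ζ x < ENNReal.ofReal t) :
    ∀ E ⊆ A, μ E ≤ ENNReal.ofReal t * carMeasure 𝒮 ζ E := by
  intro E hEA
  set level : ℕ → Set X := fun k => {x | fedQuotSup μ 𝒮 ζ (k + 1 : ℝ≥0∞)⁻¹ x < ENNReal.ofReal t}
  have hlevel_mono : Monotone fun k => E ∩ level k := fun k l hkl =>
    inter_subset_inter_right E fun x hx =>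
      (fedQuotSup_mono x (ENNReal.inv_le_inv' (by gcongr))).trans_lt hx
  have hE : E = ⋃ k, E ∩ level k := by
    rw [← inter_iUnion, eq_comm, inter_eq_left]
    exact fun x hx => mem_iUnion.2 (exists_fedQuotSup_lt_of_federerDensity_lt (h3 x (hEA hx)))
  have hlevel (k : ℕ) : μ (E ∩ level k) ≤ ENNReal.ofReal t * carMeasure 𝒮 ζ E :=
    (measure_le_mul_carMeasure_of_fedQuotSup_lt (by simp) ofReal_ne_top fun _ hx => hx.2).trans
      (by gcongr; exact carMeasure_mono 𝒮 ζ inter_subset_left)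
  calc μ E = μ (⋃ k, E ∩ level k) := congrArg μ hE
    _ = ⨆ k, μ (E ∩ level k) := h1.measure_iUnion_of_monotone hlevel_mono
    _ ≤ ENNReal.ofReal t * carMeasure 𝒮 ζ E := iSup_le hlevel

/-- if `μ` is regular, `𝒮_{μ,ζ}` covers `A` finely and the Federer density
is `< t` on `A`, then `μ E ≤ t ψ_ζ E` for every `E ⊆ A`. -/
theorem stmt0 {X : Type*} [MetricSpace X] (μ : MeasureTheory.OuterMeasure X)
    (𝒮 : Set (Set X)) (ζ : Set X → ℝ≥0∞) (A : Set X) (hA : A.Nonempty)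
    (t : ℝ) (ht : 0 < t)
    (h1 : IsRegularOM μ)
    (h2 : CoversFinely (goodClass μ 𝒮 ζ) A)
    (h3 : ∀ x ∈ A, federerDensity μ 𝒮 ζ x < ENNReal.ofReal t) :
    ∀ E ⊆ A, μ E ≤ ENNReal.ofReal t * carMeasure 𝒮 ζ E :=
  stmt0_general μ 𝒮 ζ A t h1 h3
end

section
/- Let X be a metric space, μ a measure over X, α > 0, c_α > 0, and A ⊆ X. If the class ℱ_{μ,ζ_α} covers A finely, then the Hausdorff Federer density 𝔡^α(μ,·): A → [0,+∞] is Borel measurable with respect to the subspace topology of A. -/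
open MeasureTheory Set ENNReal Filter

/-!
For a fixed scale `ε`, the supremum of the quotients `μ S / ζ_α(S)` over good closed sets
`S ∋ x` with `diam S < ε` is lower semicontinuous in `x`: if `S` witnesses a value above `v`
at `x`, then `insert y S` witnesses it at every `y` close enough to `x`, because inserting `y`
enlarges the diameter by at most `d(x, y)`, does not decrease `μ`, and `ζ_α` depends
continuously and monotonically on the diameter. The density is the infimum of these functions
over the countably many scales `ε = 1 / n`, hence Borel on `X`, and so on `A ⊆ X`.
-/

open Topology

section FedererDensity

variable {X : Type*} [MetricSpace X]

noncomputable def approxFedererDensity (μ : OuterMeasure X) (𝒮 : Set (Set X)) (ζ : Set X → ℝ≥0∞)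
    (ε : ℝ≥0∞) (x : X) : ℝ≥0∞ :=
  ⨆ (S : Set X) (_ : S ∈ goodClass μ 𝒮 ζ) (_ : x ∈ S) (_ : Metric.ediam S < ε),
    fedQuot μ ζ S

lemma ediam_insert_le_add_edist {S : Set X} {x : X} (hx : x ∈ S) (y : X) :
    Metric.ediam (insert y S) ≤ Metric.ediam S + edist y x := by
  rw [insert_eq, add_comm]
  simpa using Metric.ediam_union_le_add_edist (mem_singleton y) hx

lemma insert_mem_closedSets {S : Set X} (hS : S ∈ closedSets X) (y : X) :
    insert y S ∈ closedSets X := by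
  rw [insert_eq]
  exact isClosed_singleton.union hS

lemma zetaDiam_eq (cα α : ℝ) (S : Set X) :
    zetaDiam cα α S = ENNReal.ofReal cα * Metric.ediam S ^ α :=
  rfl

lemma zetaDiam_ne_top {cα α : ℝ} (hα : 0 ≤ α) {S : Set X} (hS : Metric.ediam S ≠ ⊤) :
    zetaDiam cα α S ≠ ⊤ :=
  mul_ne_top ofReal_ne_top (rpow_ne_top_of_nonneg hα hS)

lemma mem_goodClass_and_lt_fedQuot_iff {μ : OuterMeasure X} {𝒮 : Set (Set X)}
    {ζ : Set X → ℝ≥0∞} {S : Set X} (hS : S ∈ 𝒮) {v : ℝ≥0∞} (hv : v ≠ ⊤) (hζ : ζ S ≠ ⊤) :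
    S ∈ goodClass μ 𝒮 ζ ∧ v < fedQuot μ ζ S ↔ v * ζ S < μ S := by
  by_cases hζ0 : ζ S = 0
  · simp [goodClass, fedQuot, hS, hζ0, hv.lt_top, pos_iff_ne_zero]
  · simp [goodClass, fedQuot, hS, hζ0, hζ, ENNReal.lt_div_iff_mul_lt (Or.inl hζ0) (Or.inl hζ)]

lemma monotone_approxFedererDensity (μ : OuterMeasure X) (𝒮 : Set (Set X))
    (ζ : Set X → ℝ≥0∞) (x : X) : Monotone fun ε => approxFedererDensity μ 𝒮 ζ ε x :=
  fun _ _ hε => iSup₂_mono fun _ _ => iSup₂_mono' fun hx hd => ⟨hx, hd.trans_le hε, le_rfl⟩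

lemma lowerSemicontinuous_approxFedererDensity (μ : OuterMeasure X) {𝒮 : Set (Set X)}
    (h𝒮 : ∀ S ∈ 𝒮, ∀ y, insert y S ∈ 𝒮) {cα α : ℝ} (hα : 0 ≤ α) (ε : ℝ≥0∞) :
    LowerSemicontinuous (approxFedererDensity μ 𝒮 (zetaDiam cα α) ε) := by
  intro x v hv
  obtain ⟨S, hSgood, hxS, hSε, hvS⟩ : ∃ S ∈ goodClass μ 𝒮 (zetaDiam cα α), x ∈ S ∧
      Metric.ediam S < ε ∧ v < fedQuot μ (zetaDiam cα α) S := by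
    simpa only [approxFedererDensity, lt_iSup_iff, exists_prop] using hv
  have hv_top : v ≠ ⊤ := ne_top_of_lt hvS
  have hS_top : Metric.ediam S ≠ ⊤ := ne_top_of_lt hSε
  have hgauge : Continuous fun t : ℝ≥0∞ => v * (ENNReal.ofReal cα * t ^ α) :=
    (ENNReal.continuous_const_mul hv_top).comp
      ((ENNReal.continuous_const_mul ofReal_ne_top).comp continuous_rpow_const)
  have hdist : Continuous fun y => Metric.ediam S + edist y x :=
    continuous_const.add (continuous_id.edist continuous_const)
  have hvμS : v * zetaDiam cα α S < μ S :=
    (mem_goodClass_and_lt_fedQuot_iff hSgood.1 hv_top (zetaDiam_ne_top hα hS_top)).1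
      ⟨hSgood, hvS⟩
  have hnear_ε : ∀ᶠ y in 𝓝 x, Metric.ediam S + edist y x < ε :=
    hdist.continuousAt.eventually_lt continuousAt_const (by simpa using hSε)
  have hnear_μ :
      ∀ᶠ y in 𝓝 x, v * (ENNReal.ofReal cα * (Metric.ediam S + edist y x) ^ α) < μ S :=
    (hgauge.comp hdist).continuousAt.eventually_lt continuousAt_const
      (by simpa [zetaDiam_eq] using hvμS)
  filter_upwards [hnear_ε, hnear_μ] with y hyε hyμ
  have hdiam := ediam_insert_le_add_edist hxS y
  have hT : insert y S ∈ goodClass μ 𝒮 (zetaDiam cα α) ∧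
      v < fedQuot μ (zetaDiam cα α) (insert y S) := by
    refine (mem_goodClass_and_lt_fedQuot_iff (h𝒮 S hSgood.1 y) hv_top
      (zetaDiam_ne_top hα (ne_top_of_lt (hdiam.trans_lt hyε)))).2 ?_
    calc v * zetaDiam cα α (insert y S)
        ≤ v * (ENNReal.ofReal cα * (Metric.ediam S + edist y x) ^ α) := by
          rw [zetaDiam_eq]; gcongr
      _ < μ S := hyμ
      _ ≤ μ (insert y S) := μ.mono (subset_insert y S)
  exact lt_of_lt_of_le hT.2 <| le_iSup₂_of_le (insert y S) hT.1 <|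
    le_iSup₂_of_le (mem_insert y S) (hdiam.trans_lt hyε) le_rfl

lemma iInf_pos_eq_iInf_inv_natCast {β : Type*} [CompleteLattice β] {f : ℝ≥0∞ → β}
    (hf : Monotone f) : ⨅ (ε : ℝ≥0∞) (_ : 0 < ε), f ε = ⨅ n : ℕ, f (n : ℝ≥0∞)⁻¹ := by
  refine le_antisymm (le_iInf fun n => iInf₂_le _ (ENNReal.inv_pos.2 (natCast_ne_top n)))
    (le_iInf₂ fun ε hε => ?_)
  obtain ⟨n, hn⟩ := exists_inv_nat_lt hε.ne'
  exact iInf_le_of_le n (hf hn.le)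

lemma federerDensity_eq_iInf_approxFedererDensity (μ : OuterMeasure X) (𝒮 : Set (Set X))
    (ζ : Set X → ℝ≥0∞) (x : X) :
    federerDensity μ 𝒮 ζ x = ⨅ n : ℕ, approxFedererDensity μ 𝒮 ζ (n : ℝ≥0∞)⁻¹ x :=
  iInf_pos_eq_iInf_inv_natCast (monotone_approxFedererDensity μ 𝒮 ζ x)

lemma measurable_federerDensity [MeasurableSpace X] [OpensMeasurableSpace X]
    (μ : OuterMeasure X) {𝒮 : Set (Set X)} (h𝒮 : ∀ S ∈ 𝒮, ∀ y, insert y S ∈ 𝒮)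
    {cα α : ℝ} (hα : 0 ≤ α) :
    Measurable (federerDensity μ 𝒮 (zetaDiam cα α)) := by
  simp_rw [funext (federerDensity_eq_iInf_approxFedererDensity μ 𝒮 (zetaDiam cα α))]
  exact .iInf fun n => (lowerSemicontinuous_approxFedererDensity μ h𝒮 hα _).measurable

end FedererDensity

theorem stmt6_general {X : Type*} [MetricSpace X] (μ : MeasureTheory.OuterMeasure X)
    (α cα : ℝ) (hα : 0 < α) (A : Set X) :
    @Measurable A ℝ≥0∞ (borel A) ENNReal.measurableSpace
      (fun x : A => federerDensity μ (closedSets X) (zetaDiam cα α) (x : X)) := by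
  borelize X ↥A
  exact (measurable_federerDensity μ (fun _ hS => insert_mem_closedSets hS) hα.le).comp
    continuous_subtype_val.measurable

/-- the Hausdorff Federer density `𝔡^α(μ,·)` is Borel with respect to the
subspace topology of `A`. -/
theorem stmt6 {X : Type*} [MetricSpace X] (μ : MeasureTheory.OuterMeasure X)
    (α cα : ℝ) (hα : 0 < α) (hc : 0 < cα) (A : Set X)
    (h : CoversFinely (goodClass μ (closedSets X) (zetaDiam cα α)) A) :
    @Measurable A ℝ≥0∞ (borel A) ENNReal.measurableSpace
      (fun x : A => federerDensity μ (closedSets X) (zetaDiam cα α) (x : X)) :=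
  stmt6_general μ α cα hα A
end

section
/- If a metric space X is diametrically regular, then for every x ∈ X there exist R_x > 0 and δ_x > 0 such that whenever 0 < t < δ_x and y lies in the open ball B(x,R_x), one has diam(B(y,t)) = diam(𝔹(y,t)), where B(y,t) and 𝔹(y,t) are the open and the closed ball of center y and radius t respectively. -/
open MeasureTheory Set ENNReal Filter

/-- in a diametrically regular metric space, near every point and for small
radii, open and closed balls have the same diameter. -/
theorem stmt10 {X : Type*} [MetricSpace X] (h : DiametricallyRegular X) :
    ∀ x : X, ∃ R > (0 : ℝ), ∃ δ > (0 : ℝ), ∀ t : ℝ, 0 < t → t < δ →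
      ∀ y ∈ Metric.ball x R,
        EMetric.diam (Metric.ball y t) = EMetric.diam (Metric.closedBall y t) := by
  intro x
  obtain ⟨R, hR, δ, hδ, hcont⟩ := h x
  refine ⟨R, hR, δ, hδ, fun t ht htδ y hy => ?_⟩
  refine le_antisymm (EMetric.diam_mono Metric.ball_subset_closedBall) ?_
  have htmem : t ∈ Set.Ioo (0 : ℝ) δ := ⟨ht, htδ⟩
  have hc : ContinuousWithinAt (fun r : ℝ => EMetric.diam (Metric.ball y r))
      (Set.Ioo 0 δ) t := (hcont y hy) t htmem
  have hc' : Filter.Tendsto (fun r : ℝ => EMetric.diam (Metric.ball y r))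
      (nhdsWithin t (Set.Ioo t δ)) (nhds (EMetric.diam (Metric.ball y t))) :=
    hc.tendsto.mono_left (nhdsWithin_mono t (Set.Ioo_subset_Ioo ht.le le_rfl))
  have hne : (nhdsWithin t (Set.Ioo t δ)).NeBot := by
    exact left_nhdsWithin_Ioo_neBot htδ
  refine ge_of_tendsto hc' ?_
  filter_upwards [self_mem_nhdsWithin] with r hr
  exact EMetric.diam_mono (fun z hz =>
    lt_of_le_of_lt (Metric.mem_closedBall.mp hz) hr.1)
end

section
/- Let X be a diametrically regular metric space, μ a measure over X, α > 0, c_α > 0, and A ⊆ X. If (ℱ_b)_{μ,ζ_{b,α}} covers A finely, then the spherical Federer density 𝔰^α(μ,·): A → [0,+∞] is Borel measurable with respect to the subspace topology of A. -/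
open MeasureTheory Set ENNReal Filter

/-! The density is the decreasing limit, as `ε → 0`, of the suprema `federerSup ε` of the
quotients over balls of diameter `< ε`. Near any point, diametric regularity makes these suprema
lower semicontinuous for all small `ε`: a closed ball witnessing `t < federerSup ε x` can be
slightly inflated without losing the strict inequalities, and the inflated ball contains a whole
neighbourhood of `x`. A countable infimum of functions that are lower semicontinuous on open sets
exhausting the space is Borel. -/

open Metric Topology

theorem measurable_piecewise_of_lowerSemicontinuousOn {X : Type*} [TopologicalSpace X]
    [MeasurableSpace X] [OpensMeasurableSpace X] {U : Set X} [DecidablePred (· ∈ U)]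
    {g h : X → ℝ≥0∞} (hU : IsOpen U) (hg : LowerSemicontinuousOn g U) (hh : Measurable h) :
    Measurable (U.piecewise g h) := by
  refine measurable_of_Ioi fun t => ?_
  obtain ⟨V, hV, hUV⟩ := lowerSemicontinuousOn_iff_preimage_Ioi.1 hg t
  rw [piecewise_preimage, Set.ite, inter_comm (g ⁻¹' _), hUV]
  exact (hU.inter hV).measurableSet.union ((hh measurableSet_Ioi).diff hU.measurableSet)

theorem measurable_iInf_of_eventually_lowerSemicontinuousAt {X : Type*} [TopologicalSpace X]
    [MeasurableSpace X] [OpensMeasurableSpace X] {G : ℝ≥0∞ → X → ℝ≥0∞}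
    (hG : ∀ x, Monotone fun ε => G ε x)
    (hlsc : ∀ x, ∀ᶠ ε in 𝓝[>] 0, ∀ᶠ y in 𝓝 x, LowerSemicontinuousAt (G ε) y) :
    Measurable fun x => ⨅ (ε) (_ : 0 < ε), G ε x := by
  classical
  let U : ℕ → Set X := fun n => interior {y | LowerSemicontinuousAt (G (n : ℝ≥0∞)⁻¹) y}
  have hmeas : ∀ n, Measurable ((U n).piecewise (G (n : ℝ≥0∞)⁻¹) ⊤) := fun n =>
    measurable_piecewise_of_lowerSemicontinuousOn isOpen_interior
      (fun y hy => (interior_subset hy : LowerSemicontinuousAt _ y).lowerSemicontinuousWithinAt _)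
      measurable_const
  have hinv : Tendsto (fun n : ℕ => (n : ℝ≥0∞)⁻¹) atTop (𝓝[>] 0) :=
    tendsto_nhdsWithin_iff.2 ⟨ENNReal.tendsto_inv_nat_nhds_zero,
      .of_forall fun n => ENNReal.inv_pos.2 (natCast_ne_top n)⟩
  convert Measurable.iInf hmeas using 1
  ext x
  refine le_antisymm (le_iInf fun n => ?_) (le_iInf₂ fun ε hε => ?_)
  · by_cases hx : x ∈ U n
    · rw [piecewise_eq_of_mem _ _ _ hx]
      exact iInf₂_le _ (ENNReal.inv_pos.2 (natCast_ne_top n))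
    · rw [piecewise_eq_of_notMem _ _ _ hx]
      exact le_top
  · obtain ⟨n, hn, hnε⟩ := ((hinv.eventually (hlsc x)).and
      ((hinv.mono_right nhdsWithin_le_nhds).eventually_lt_const hε)).exists
    calc ⨅ k, (U k).piecewise (G (k : ℝ≥0∞)⁻¹) ⊤ x
        ≤ (U n).piecewise (G (n : ℝ≥0∞)⁻¹) ⊤ x := iInf_le _ n
      _ = G (n : ℝ≥0∞)⁻¹ x := piecewise_eq_of_mem _ _ _ (mem_interior_iff_mem_nhds.2 hn)
      _ ≤ G ε x := hG x hnε.le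

section FedererDensity

variable {X : Type*} [MetricSpace X]

noncomputable def federerSup (μ : OuterMeasure X) (𝒮 : Set (Set X)) (ζ : Set X → ℝ≥0∞)
    (ε : ℝ≥0∞) (x : X) : ℝ≥0∞ :=
  ⨆ (S : Set X) (_ : S ∈ goodClass μ 𝒮 ζ) (_ : x ∈ S) (_ : ediam S < ε), fedQuot μ ζ S

theorem lt_federerSup_iff {μ : OuterMeasure X} {𝒮 : Set (Set X)} {ζ : Set X → ℝ≥0∞}
    {ε t : ℝ≥0∞} {x : X} :
    t < federerSup μ 𝒮 ζ ε x ↔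
      ∃ S ∈ goodClass μ 𝒮 ζ, x ∈ S ∧ ediam S < ε ∧ t < fedQuot μ ζ S := by
  simp only [federerSup, lt_iSup_iff, exists_prop]

theorem federerSup_mono (μ : OuterMeasure X) (𝒮 : Set (Set X)) (ζ : Set X → ℝ≥0∞) (x : X) :
    Monotone fun ε => federerSup μ 𝒮 ζ ε x := fun _ _ hε =>
  iSup₂_mono fun _ _ => iSup_mono fun _ => iSup_mono' fun hS => ⟨hS.trans_le hε, le_rfl⟩

theorem mul_lt_of_lt_fedQuot {μ : OuterMeasure X} {ζ : Set X → ℝ≥0∞} {S : Set X} {t : ℝ≥0∞}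
    (hS : ¬(ζ S = 0 ∧ μ S = 0)) (ht : t < fedQuot μ ζ S) : t ≠ ⊤ ∧ t * ζ S < μ S := by
  refine ⟨ht.ne_top, ?_⟩
  unfold fedQuot at ht
  split_ifs at ht with hζ
  · rw [hζ, mul_zero, pos_iff_ne_zero]
    exact fun hμ => hS ⟨hζ, hμ⟩
  · by_cases hζtop : ζ S = ⊤
    · simp [hζtop] at ht
    · exact (ENNReal.lt_div_iff_mul_lt (.inl hζ) (.inl hζtop)).1 ht

theorem lt_fedQuot_of_mul_lt {μ : OuterMeasure X} {ζ : Set X → ℝ≥0∞} {S : Set X} {t : ℝ≥0∞}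
    (hζ : ζ S ≠ ⊤) (ht : t ≠ ⊤) (h : t * ζ S < μ S) : t < fedQuot μ ζ S := by
  unfold fedQuot
  split_ifs with hζ0
  · exact ht.lt_top
  · exact (ENNReal.lt_div_iff_mul_lt (.inl hζ0) (.inl hζ)).2 h

theorem closedBall_eq_closedBall_min_of_ediam_lt {y : X} {r s : ℝ}
    (h : ediam (closedBall y r) < ENNReal.ofReal s) :
    closedBall y r = closedBall y (min r s) := by
  refine (closedBall_subset_closedBall (min_le_left r s)).antisymm' fun z hz => ?_
  have hy : y ∈ closedBall y r := mem_closedBall_self (dist_nonneg.trans hz)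
  have hzy : dist z y < s := edist_lt_ofReal.1 ((edist_le_ediam_of_mem hz hy).trans_lt h)
  exact mem_closedBall.2 (le_min hz hzy.le)

theorem exists_gt_ediam_closedBall_mem {y : X} {r : ℝ} {D : Set ℝ≥0∞} (hD : IsOpen D)
    (hD' : IsLowerSet D) (hcont : ContinuousAt (fun s => ediam (ball y s)) r)
    (hr : ediam (closedBall y r) ∈ D) : ∃ u > r, ediam (closedBall y u) ∈ D := by
  have hball : ediam (ball y r) ∈ D := hD' (ediam_mono ball_subset_closedBall) hr
  obtain ⟨s, hs, hrs⟩ := (((hcont.eventually_mem (hD.mem_nhds hball)).filter_mono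
    nhdsWithin_le_nhds).and (self_mem_nhdsWithin (s := Ioi r))).exists
  exact ⟨(r + s) / 2, by linarith,
    hD' (ediam_mono (closedBall_subset_ball (by linarith))) hs⟩

theorem eventually_lt_federerSup_closedBalls {μ : OuterMeasure X} {α cα : ℝ} (hα : 0 ≤ α)
    {ε t : ℝ≥0∞} {x y : X} {r : ℝ} (hcont : ContinuousAt (fun s => ediam (ball y s)) r)
    (hS : closedBall y r ∈ goodClass μ (closedBalls X) (zetaDiam cα α))
    (hx : x ∈ closedBall y r) (hdiam : ediam (closedBall y r) < ε)
    (ht : t < fedQuot μ (zetaDiam cα α) (closedBall y r)) :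
    ∀ᶠ x' in 𝓝 x, t < federerSup μ (closedBalls X) (zetaDiam cα α) ε x' := by
  obtain ⟨htop, hlt⟩ := mul_lt_of_lt_fedQuot (fun h => hS.2 (.inl h)) ht
  let D : Set ℝ≥0∞ := {d | d < ε ∧ t * (ENNReal.ofReal cα * d ^ α) < μ (closedBall y r)}
  have hD : IsOpen D :=
    (isOpen_lt continuous_id continuous_const).inter (isOpen_lt
      ((ENNReal.continuous_const_mul htop).comp ((ENNReal.continuous_const_mul ofReal_ne_top).comp
        ENNReal.continuous_rpow_const)) continuous_const)
  have hD' : IsLowerSet D := fun d d' hd'd hd =>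
    ⟨hd'd.trans_lt hd.1, lt_of_le_of_lt (by gcongr) hd.2⟩
  obtain ⟨u, hru, hu, hζu⟩ := exists_gt_ediam_closedBall_mem hD hD' hcont ⟨hdiam, hlt⟩
  have hζ : zetaDiam cα α (closedBall y u) ≠ ⊤ :=
    mul_ne_top ofReal_ne_top (rpow_lt_top_of_nonneg hα isBounded_closedBall.ediam_ne_top).ne
  have hμ : t * zetaDiam cα α (closedBall y u) < μ (closedBall y u) :=
    hζu.trans_le (measure_mono (closedBall_subset_closedBall hru.le))
  have hgood : closedBall y u ∈ goodClass μ (closedBalls X) (zetaDiam cα α) := by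
    refine ⟨⟨y, u, (dist_nonneg.trans hx).trans_lt hru, rfl⟩, ?_⟩
    rintro (⟨-, h⟩ | ⟨h, -⟩)
    · exact (pos_of_gt hμ).ne' h
    · exact hζ h
  filter_upwards [isOpen_ball.mem_nhds (mem_ball.2 (lt_of_le_of_lt hx hru))] with x' hx'
  exact lt_federerSup_iff.2 ⟨_, hgood, ball_subset_closedBall hx', hu,
    lt_fedQuot_of_mul_lt hζ htop hμ⟩

theorem eventually_lowerSemicontinuousAt_federerSup (μ : OuterMeasure X) {α : ℝ} (cα : ℝ)
    (hα : 0 ≤ α) (hX : DiametricallyRegular X) (x₀ : X) :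
    ∀ᶠ ε in 𝓝[>] 0, ∀ᶠ x in 𝓝 x₀,
      LowerSemicontinuousAt (federerSup μ (closedBalls X) (zetaDiam cα α) ε) x := by
  obtain ⟨R, hR, δ, hδ, hcont⟩ := hX x₀
  set η := min (δ / 2) (R / 2)
  have hηδ : η < δ := (min_le_left _ _).trans_lt (half_lt_self hδ)
  have hηR : η ≤ R / 2 := min_le_right _ _
  have hsmall : ∀ᶠ ε in 𝓝[>] (0 : ℝ≥0∞), ε < ENNReal.ofReal η :=
    (gt_mem_nhds (ofReal_pos.2 (by positivity))).filter_mono nhdsWithin_le_nhds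
  filter_upwards [hsmall] with ε hε
  filter_upwards [ball_mem_nhds x₀ (half_pos hR)] with x hx t ht
  obtain ⟨S, hS, hxS, hdiam, htQ⟩ := lt_federerSup_iff.1 ht
  obtain ⟨y, r, hr, rfl⟩ := hS.1
  -- shrinking the radius to at most `η` keeps the ball inside the regularity window at `x₀`
  have hball := closedBall_eq_closedBall_min_of_ediam_lt (hdiam.trans hε)
  rw [hball] at hS hxS hdiam htQ
  have hr' : min r η ∈ Ioo 0 δ :=
    ⟨lt_min hr (by positivity), (min_le_right _ _).trans_lt hηδ⟩
  have hy : y ∈ ball x₀ R := mem_ball.2 <| calc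
    dist y x₀ ≤ dist x y + dist x x₀ := dist_triangle_left _ _ _
    _ < η + R / 2 := add_lt_add_of_le_of_lt (hxS.trans (min_le_right _ _)) hx
    _ ≤ R := by linarith
  exact eventually_lt_federerSup_closedBalls hα
    ((hcont y hy).continuousAt (Ioo_mem_nhds hr'.1 hr'.2)) hS hxS hdiam htQ

end FedererDensity

theorem stmt13_general {X : Type*} [MetricSpace X] (μ : MeasureTheory.OuterMeasure X)
    (α cα : ℝ) (hα : 0 < α) (A : Set X)
    (hX : DiametricallyRegular X) :
    @Measurable A ℝ≥0∞ (borel A) ENNReal.measurableSpace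
      (fun x : A => federerDensity μ (closedBalls X) (zetaDiam cα α) (x : X)) := by
  let _ : MeasurableSpace X := borel X
  have _ : BorelSpace X := ⟨rfl⟩
  let _ : MeasurableSpace A := borel A
  have _ : BorelSpace A := ⟨rfl⟩
  have hmeas : Measurable fun x : X => federerDensity μ (closedBalls X) (zetaDiam cα α) x :=
    measurable_iInf_of_eventually_lowerSemicontinuousAt (federerSup_mono μ _ _)
      (eventually_lowerSemicontinuousAt_federerSup μ cα hα.le hX)
  exact hmeas.comp continuous_subtype_val.measurable

/-- the spherical Federer density `𝔰^α(μ,·)` is Borel with respect to the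
subspace topology of `A`. -/
theorem stmt13 {X : Type*} [MetricSpace X] (μ : MeasureTheory.OuterMeasure X)
    (α cα : ℝ) (hα : 0 < α) (hc : 0 < cα) (A : Set X)
    (hX : DiametricallyRegular X)
    (h : CoversFinely (goodClass μ (closedBalls X) (zetaDiam cα α)) A) :
    @Measurable A ℝ≥0∞ (borel A) ENNReal.measurableSpace
      (fun x : A => federerDensity μ (closedBalls X) (zetaDiam cα α) (x : X)) :=
  stmt13_general μ α cα hα A hX
end
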